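/- For all natural numbers s ≥ 1, q ≥ 0, and all x: (-1)^{sq} · F_s(x) · Σ_{n=0}^{q} (-1)^{sn} F_{2sn}(x) = F_{s(q+1)}(x) · F_{sq}(x). -/

import Mathlib

/-- Fibonacci polynomials evaluated at a real `x`. -/
def fibP : ℕ → ℝ → ℝ
  | 0, _ => 0
  | 1, _ => 1
  | n + 2, x => x * fibP (n + 1) x + fibP n x

/-- Lucas polynomials evaluated at a real `x`. -/
def lucasP : ℕ → ℝ → ℝ
  | 0, _ => 2
  | 1, x => x
  | n + 2, x => x * lucasP (n + 1) x + lucasP n x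

/-
With the Lucas polynomials `L`, one has `F (2n + k) = F n * L (n + k) + (-1)^n * F k`; taking
`k = 0` gives `F (2m) = F m * L m`, and together these give
`F s * F (2(m + s)) = F (m + s) * (F (m + 2s) - (-1)^s * F m)`.
For `m = s q` this is exactly the increment of the right-hand side from `q` to `q + 1`, so the
identity follows by induction on `q`.
-/

section FibonacciPolynomials

variable (x : ℝ)

lemma fibP_add_two (n : ℕ) : fibP (n + 2) x = x * fibP (n + 1) x + fibP n x := rfl

lemma lucasP_add_two (n : ℕ) : lucasP (n + 2) x = x * lucasP (n + 1) x + lucasP n x := rfl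

lemma fibP_add_add_one (m n : ℕ) :
    fibP (m + n + 1) x = fibP (m + 1) x * fibP (n + 1) x + fibP m x * fibP n x := by
  induction n generalizing m with
  | zero => simp [fibP]
  | succ n ih =>
    rw [show m + (n + 1) + 1 = (m + 1) + n + 1 by omega, ih, fibP_add_two, fibP_add_two]
    ring

/-- d'Ocagne's identity. -/
lemma fibP_add_mul_fibP_succ_sub (n k : ℕ) :
    fibP (n + k) x * fibP (n + 1) x - fibP (n + k + 1) x * fibP n x = (-1) ^ n * fibP k x := by
  induction n with
  | zero => simp [fibP]
  | succ n ih =>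
    rw [show n + 1 + k = n + k + 1 by omega, fibP_add_two, fibP_add_two, pow_succ]
    linear_combination -ih

lemma lucasP_succ (n : ℕ) : lucasP (n + 1) x = fibP (n + 2) x + fibP n x := by
  induction n using Nat.twoStepInduction with
  | zero => simp [fibP, lucasP]
  | one => simp only [lucasP, fibP]; ring
  | more n ih₀ ih₁ =>
    rw [lucasP_add_two, ih₀, ih₁]
    linear_combination -fibP_add_two x (n + 2) - fibP_add_two x n

lemma fibP_two_mul_add (n k : ℕ) :
    fibP (2 * n + k) x = fibP n x * lucasP (n + k) x + (-1) ^ n * fibP k x := by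
  cases n with
  | zero => simp [fibP]
  | succ n =>
    have docagne := fibP_add_mul_fibP_succ_sub x (n + 1) k
    rw [show n + 1 + k = n + k + 1 by omega] at docagne ⊢
    rw [show 2 * (n + 1) + k = (n + 1) + (n + k) + 1 by omega, fibP_add_add_one, lucasP_succ]
    linear_combination docagne

lemma fibP_two_mul (n : ℕ) : fibP (2 * n) x = fibP n x * lucasP n x := by
  simpa [fibP] using fibP_two_mul_add x n 0

lemma fibP_mul_fibP_two_mul_add (m s : ℕ) :
    fibP s x * fibP (2 * (m + s)) x =
      fibP (m + s) x * (fibP (m + 2 * s) x - (-1) ^ s * fibP m x) := by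
  rw [fibP_two_mul, add_comm m (2 * s), fibP_two_mul_add, add_comm s m]
  ring

end FibonacciPolynomials

theorem stmt_9_general (s q : ℕ) (x : ℝ) :
    (-1 : ℝ) ^ (s * q) * fibP s x *
        ∑ n ∈ Finset.range (q + 1), (-1 : ℝ) ^ (s * n) * fibP (2 * s * n) x =
      fibP (s * (q + 1)) x * fibP (s * q) x := by
  induction q with
  | zero => simp [fibP]
  | succ q ih =>
    have step := fibP_mul_fibP_two_mul_add x (s * q) s
    rw [show 2 * (s * q + s) = 2 * s * (q + 1) by ring, show s * q + s = s * (q + 1) by ring,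
      show s * q + 2 * s = s * (q + 1 + 1) by ring] at step
    have sign_succ : (-1 : ℝ) ^ (s * (q + 1)) = (-1) ^ (s * q) * (-1) ^ s := by
      rw [mul_add, mul_one, pow_add]
    have sign_sq : (-1 : ℝ) ^ (s * (q + 1)) * (-1) ^ (s * (q + 1)) = 1 := by
      rw [← pow_add, ← two_mul, pow_mul]; norm_num
    rw [Finset.sum_range_succ]
    linear_combination
      (fibP s x * ∑ n ∈ Finset.range (q + 1), (-1 : ℝ) ^ (s * n) * fibP (2 * s * n) x) * sign_succ
        + (-1 : ℝ) ^ s * ih + fibP s x * fibP (2 * s * (q + 1)) x * sign_sq + step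

theorem stmt_9 (s q : ℕ) (hs : 1 ≤ s) (x : ℝ) :
    (-1 : ℝ) ^ (s * q) * fibP s x *
        ∑ n ∈ Finset.range (q + 1), (-1 : ℝ) ^ (s * n) * fibP (2 * s * n) x =
      fibP (s * (q + 1)) x * fibP (s * q) x :=
  stmt_9_general s q x
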